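/- Let Z be a zero forcing set of A ∈ F^{n×n} with terminal set T and core matrix B = (RA)_{T,Z} where R(b) = b − A·Forcing(A,Z,b). Then Ax = b has a solution if and only if By = (Rb)_T has a solution y ∈ F^Z; moreover, given such a y, the vector x = x' + Forcing(A,Z,b − Ax'), where x' has x'_Z = y and zeros elsewhere, satisfies Ax = b. -/

import Mathlib

/-!
The forcing algorithm is linear in its right-hand side, and `R(c)` vanishes at every forcing
parent: once `u` is forced, the row of its parent involves no vertex forced later, so that row
of `A · Forcing(c)` already equals `c`. Hence `A · Forcing(c) = c` as soon as `R(c)` vanishes on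
the terminals. On the other hand, a vector vanishing on `Z` is determined by the parent rows of
`A x` (they are triangular along the forcing order), so `Forcing(A x) = x` for such `x`; by
linearity `(R(A x))_T` then depends only on `x_Z`, and equals `B x_Z`.
-/

open Matrix

section ZeroForcing

variable {V : Type*}

/-- The blue-coloring closure of the zero forcing process on a directed graph with
edge relation `E`, starting from the initially blue set `Z`:  a blue vertex `u` all of
whose out-neighbors except `v` are already blue forces `v` to become blue. -/
inductive Blue (E : V → V → Prop) (Z : Set V) : V → Prop
  | init {v : V} : v ∈ Z → Blue E Z v
  | force {u v : V} : Blue E Z u → E u v →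
      (∀ w, E u w → w ≠ v → Blue E Z w) → Blue E Z v

/-- `Z` is a zero forcing set if the forcing process colors every vertex blue. -/
def IsZeroForcingSet (E : V → V → Prop) (Z : Set V) : Prop := ∀ v, Blue E Z v

end ZeroForcing

section ForcingAlg

variable {F : Type*} [Field F] {n : ℕ}

/-- The off-diagonal adjacency pattern of a matrix: `u → v` iff `u ≠ v` and `A u v ≠ 0`. -/
def adjOf (A : Matrix (Fin n) (Fin n) F) (u v : Fin n) : Prop := u ≠ v ∧ A u v ≠ 0

/-- A chronological list of forces for the zero forcing set `Z` of `A`:  `π` lists the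
vertices outside `Z` in the order they are forced, and `par u` is the forcing parent of
`u` (the vertex that forces `u`). -/
structure ForcingOrder (A : Matrix (Fin n) (Fin n) F) (Z : Finset (Fin n)) where
  π : List (Fin n)
  par : Fin n → Fin n
  nodup : π.Nodup
  mem_iff : ∀ v, v ∈ π ↔ v ∉ Z
  par_ne_self : ∀ u ∈ π, par u ≠ u
  par_edge : ∀ u ∈ π, A (par u) u ≠ 0
  par_blue : ∀ u ∈ π, par u ∈ Z ∨ (par u ∈ π ∧ π.idxOf (par u) < π.idxOf u)
  others_blue : ∀ u ∈ π, ∀ w, w ≠ par u → w ≠ u → A (par u) w ≠ 0 →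
      (w ∈ Z ∨ (w ∈ π ∧ π.idxOf w < π.idxOf u))
  par_inj : ∀ u ∈ π, ∀ v ∈ π, par u = par v → u = v

/-- One step of the forcing algorithm: `x_u ← (b_{u↑} − A_{u↑,*} x) / A_{u↑,u}`. -/
def forcingStep (A : Matrix (Fin n) (Fin n) F) (par : Fin n → Fin n)
    (b : Fin n → F) (x : Fin n → F) (u : Fin n) : Fin n → F :=
  Function.update x u ((b (par u) - A (par u) ⬝ᵥ x) / A (par u) u)

/-- The forcing algorithm `Forcing(A, Z, b)`: starting from `x = 0`, iterate the forcing
update over the vertices outside `Z` in forcing order. -/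
def Forcing (A : Matrix (Fin n) (Fin n) F) {Z : Finset (Fin n)}
    (fo : ForcingOrder A Z) (b : Fin n → F) : Fin n → F :=
  fo.π.foldl (forcingStep A fo.par b) 0

/-- The map `R(b) = b − A · Forcing(A, Z, b)`. -/
def Rmap (A : Matrix (Fin n) (Fin n) F) {Z : Finset (Fin n)}
    (fo : ForcingOrder A Z) (b : Fin n → F) : Fin n → F :=
  b - A.mulVec (Forcing A fo b)

/-- A vertex is a terminal if it has no forcing child. -/
def IsTerminal {A : Matrix (Fin n) (Fin n) F} {Z : Finset (Fin n)}
    (fo : ForcingOrder A Z) (v : Fin n) : Prop :=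
  ∀ u ∈ fo.π, fo.par u ≠ v

instance {A : Matrix (Fin n) (Fin n) F} {Z : Finset (Fin n)} (fo : ForcingOrder A Z) :
    DecidablePred (IsTerminal fo) := fun v =>
  decidable_of_iff (∀ u ∈ fo.π, fo.par u ≠ v) Iff.rfl

/-- The core matrix `B = (R A)_{T,Z}`: its column indexed by `z ∈ Z` is `(R a_z)_T`,
where `a_z` is the `z`-th column of `A` and `T` is the terminal set. -/
def coreMatrix (A : Matrix (Fin n) (Fin n) F) {Z : Finset (Fin n)}
    (fo : ForcingOrder A Z) :
    Matrix {v // IsTerminal fo v} {v // v ∈ Z} F :=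
  Matrix.of fun t z => Rmap A fo (fun i => A i z.1) t.1

end ForcingAlg

namespace ForcingOrder

variable {F : Type*} [Field F] {n : ℕ} {A : Matrix (Fin n) (Fin n) F} {Z : Finset (Fin n)}
  (fo : ForcingOrder A Z)

lemma mem_or_idxOf_lt {u w : Fin n} (hu : u ∈ fo.π) (hwu : w ≠ u) (hA : A (fo.par u) w ≠ 0) :
    w ∈ Z ∨ (w ∈ fo.π ∧ fo.π.idxOf w < fo.π.idxOf u) := by
  by_cases hwp : w = fo.par u
  · exact hwp ▸ fo.par_blue u hu
  · exact fo.others_blue u hu w hwp hwu hA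

lemma entry_par_eq_zero_of_mem_tail {s t : List (Fin n)} {u w : Fin n}
    (h : fo.π = s ++ u :: t) (hw : w ∈ t) : A (fo.par u) w = 0 := by
  have hnd : (s ++ u :: t).Nodup := h ▸ fo.nodup
  have hus : u ∉ s := fun hs => List.disjoint_of_nodup_append hnd hs List.mem_cons_self
  have hws : w ∉ s := fun hs => List.disjoint_of_nodup_append hnd hs (List.mem_cons_of_mem u hw)
  have hwu : w ≠ u := by
    rintro rfl
    exact (List.nodup_cons.mp hnd.of_append_right).1 hw
  have hidx : fo.π.idxOf u < fo.π.idxOf w := by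
    rw [h, List.idxOf_append_of_notMem hus, List.idxOf_append_of_notMem hws,
      List.idxOf_cons_self, List.idxOf_cons_ne _ (Ne.symm hwu)]
    omega
  have hwZ : w ∉ Z := (fo.mem_iff w).1 (h ▸ List.mem_append_right s (List.mem_cons_of_mem u hw))
  by_contra hA
  rcases fo.mem_or_idxOf_lt (h ▸ List.mem_append_right s List.mem_cons_self) hwu hA with
    hZ | ⟨-, hlt⟩
  · exact hwZ hZ
  · omega

lemma eq_zero_of_mulVec_par_eq_zero {y : Fin n → F} (hZ : ∀ v ∈ Z, y v = 0)
    (hpar : ∀ u ∈ fo.π, (A *ᵥ y) (fo.par u) = 0) : y = 0 := by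
  suffices h : ∀ k, ∀ u ∈ fo.π, fo.π.idxOf u = k → y u = 0 by
    funext v
    by_cases hv : v ∈ Z
    · exact hZ v hv
    · exact h _ v ((fo.mem_iff v).2 hv) rfl
  intro k
  induction k using Nat.strong_induction_on with
  | _ k ih =>
  rintro u hu rfl
  have hrow : (A *ᵥ y) (fo.par u) = A (fo.par u) u * y u := by
    refine Finset.sum_eq_single u (fun w _ hwu => ?_) (absurd (Finset.mem_univ u))
    by_cases hA : A (fo.par u) w = 0
    · simp only [hA, zero_mul]
    · rcases fo.mem_or_idxOf_lt hu hwu hA with hwZ | ⟨hw, hlt⟩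
      · rw [hZ w hwZ, mul_zero]
      · rw [ih _ hlt w hw rfl, mul_zero]
  have := hpar u hu
  rw [hrow] at this
  exact (mul_eq_zero.mp this).resolve_left (fo.par_edge u hu)

end ForcingOrder

section ForcingStep

variable {F : Type*} [Field F] {n : ℕ} (A : Matrix (Fin n) (Fin n) F) (par : Fin n → Fin n)

lemma foldl_forcingStep_apply_of_notMem (c : Fin n → F) {l : List (Fin n)} {v : Fin n}
    (hv : v ∉ l) (x : Fin n → F) : l.foldl (forcingStep A par c) x v = x v := by
  induction l generalizing x with
  | nil => rfl
  | cons u l ih =>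
    rw [List.foldl_cons, ih (fun h => hv (List.mem_cons_of_mem u h))]
    refine Function.update_of_ne ?_ _ _
    rintro rfl
    exact hv List.mem_cons_self

lemma foldl_forcingStep_add (c₁ c₂ : Fin n → F) (l : List (Fin n)) (x₁ x₂ : Fin n → F) :
    l.foldl (forcingStep A par (c₁ + c₂)) (x₁ + x₂)
      = l.foldl (forcingStep A par c₁) x₁ + l.foldl (forcingStep A par c₂) x₂ := by
  induction l generalizing x₁ x₂ with
  | nil => rfl
  | cons u l ih =>
    rw [List.foldl_cons, List.foldl_cons, List.foldl_cons, ← ih, forcingStep, forcingStep,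
      forcingStep, ← Function.update_add, dotProduct_add, Pi.add_apply, add_sub_add_comm,
      add_div]

lemma foldl_forcingStep_smul (k : F) (c : Fin n → F) (l : List (Fin n)) (x : Fin n → F) :
    l.foldl (forcingStep A par (k • c)) (k • x) = k • l.foldl (forcingStep A par c) x := by
  induction l generalizing x with
  | nil => rfl
  | cons u l ih =>
    rw [List.foldl_cons, List.foldl_cons, ← ih, forcingStep, forcingStep,
      ← Function.update_smul, dotProduct_smul, Pi.smul_apply, smul_eq_mul, smul_eq_mul,
      smul_eq_mul, ← mul_sub, mul_div_assoc]

lemma dotProduct_foldl_forcingStep (c r : Fin n → F) {l : List (Fin n)}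
    (hr : ∀ w ∈ l, r w = 0) (x : Fin n → F) :
    r ⬝ᵥ l.foldl (forcingStep A par c) x = r ⬝ᵥ x := by
  refine Finset.sum_congr rfl fun w _ => ?_
  by_cases hw : w ∈ l
  · rw [hr w hw, zero_mul, zero_mul]
  · rw [foldl_forcingStep_apply_of_notMem A par c hw]

lemma dotProduct_forcingStep_self (c x : Fin n → F) {u : Fin n} (hA : A (par u) u ≠ 0)
    (hx : x u = 0) : A (par u) ⬝ᵥ forcingStep A par c x u = c (par u) := by
  have hupd : forcingStep A par c x u
      = x + Pi.single u ((c (par u) - A (par u) ⬝ᵥ x) / A (par u) u) := by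
    funext w
    by_cases hw : w = u
    · subst hw; simp [forcingStep, hx]
    · simp [forcingStep, hw]
  rw [hupd, dotProduct_add, dotProduct_single, mul_div_cancel₀ _ hA, add_sub_cancel]

end ForcingStep

section Forcing

variable {F : Type*} [Field F] {n : ℕ} (A : Matrix (Fin n) (Fin n) F) {Z : Finset (Fin n)}
  (fo : ForcingOrder A Z)

lemma forcing_apply_of_mem (c : Fin n → F) {v : Fin n} (hv : v ∈ Z) : Forcing A fo c v = 0 :=
  foldl_forcingStep_apply_of_notMem A fo.par c (fun h => (fo.mem_iff v).1 h hv) 0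

def rmapLinearMap : (Fin n → F) →ₗ[F] (Fin n → F) where
  toFun := Rmap A fo
  map_add' c₁ c₂ := by
    have h := foldl_forcingStep_add A fo.par c₁ c₂ fo.π 0 0
    rw [add_zero] at h
    simp only [Rmap, Forcing, h, mulVec_add]
    abel
  map_smul' k c := by
    have h := foldl_forcingStep_smul A fo.par k c fo.π 0
    rw [smul_zero] at h
    simp only [Rmap, Forcing, h, mulVec_smul, RingHom.id_apply, smul_sub]

lemma rmapLinearMap_apply (c : Fin n → F) : rmapLinearMap A fo c = Rmap A fo c := rfl

lemma rmap_par_eq_zero (c : Fin n → F) {u : Fin n} (hu : u ∈ fo.π) :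
    Rmap A fo c (fo.par u) = 0 := by
  obtain ⟨s, t, h⟩ := List.append_of_mem hu
  have hus : u ∉ s := fun hs =>
    List.disjoint_of_nodup_append (h ▸ fo.nodup) hs List.mem_cons_self
  have hrow : (A *ᵥ Forcing A fo c) (fo.par u) = c (fo.par u) := by
    rw [mulVec, Forcing, h, List.foldl_append, List.foldl_cons,
      dotProduct_foldl_forcingStep A fo.par c _
        (fun w hw => fo.entry_par_eq_zero_of_mem_tail h hw),
      dotProduct_forcingStep_self A fo.par c _ (fo.par_edge u hu)
        (foldl_forcingStep_apply_of_notMem A fo.par c hus 0)]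
  rw [Rmap, Pi.sub_apply, hrow, sub_self]

lemma forcing_mulVec {x : Fin n → F} (hx : ∀ v ∈ Z, x v = 0) :
    Forcing A fo (A *ᵥ x) = x := by
  refine sub_eq_zero.mp (fo.eq_zero_of_mulVec_par_eq_zero (fun v hv => ?_) fun u hu => ?_)
  · rw [Pi.sub_apply, forcing_apply_of_mem A fo _ hv, hx v hv, sub_self]
  · have h := rmap_par_eq_zero A fo (A *ᵥ x) hu
    rw [Rmap, Pi.sub_apply, sub_eq_zero] at h
    rw [mulVec_sub, Pi.sub_apply, h, sub_self]

lemma rmap_mulVec_apply_of_isTerminal (x : Fin n → F) (t : {v // IsTerminal fo v}) :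
    Rmap A fo (A *ᵥ x) t = (coreMatrix A fo *ᵥ fun z => x z) t := by
  have hcol : ∀ i ∉ Z, Rmap A fo (fun j => A j i) = 0 := fun i hi => by
    have h := forcing_mulVec A fo (x := Pi.single i 1) fun v hv =>
      Pi.single_eq_of_ne (by rintro rfl; exact hi hv) _
    rw [Rmap, ← col_apply', ← mulVec_single_one, h, sub_self]
  have hx : A *ᵥ x = ∑ i, x i • fun j => A j i := by
    funext j
    simp [mulVec, dotProduct, Finset.sum_apply, mul_comm]
  rw [hx, ← rmapLinearMap_apply, map_sum, ← Finset.sum_filter_add_sum_filter_not _ (· ∈ Z),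
    Finset.sum_eq_zero (s := Finset.univ.filter (· ∉ Z)) fun i hi => by
      rw [map_smul, rmapLinearMap_apply, hcol i (Finset.mem_filter.mp hi).2, smul_zero],
    add_zero, Finset.filter_mem_eq_inter, Finset.univ_inter, ← Finset.sum_coe_sort Z]
  simp [mulVec, dotProduct, coreMatrix, rmapLinearMap_apply, mul_comm]

lemma mulVec_forcing_eq_self_of_rmap_terminal {c : Fin n → F}
    (hT : ∀ t, IsTerminal fo t → Rmap A fo c t = 0) : A *ᵥ Forcing A fo c = c := by
  refine (sub_eq_zero.mp (funext fun v => ?_)).symm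
  by_cases hv : IsTerminal fo v
  · exact hT v hv
  · obtain ⟨u, hu, rfl⟩ : ∃ u ∈ fo.π, fo.par u = v := by
      simpa [IsTerminal] using hv
    exact rmap_par_eq_zero A fo c hu

lemma mulVec_add_forcing_sub_mulVec {b x' : Fin n → F}
    (hcore : (coreMatrix A fo *ᵥ fun z => x' z) = fun t => Rmap A fo b t.1) :
    A *ᵥ (x' + Forcing A fo (b - A *ᵥ x')) = b := by
  have hT : ∀ t, IsTerminal fo t → Rmap A fo (b - A *ᵥ x') t = 0 := fun t ht => by
    rw [← rmapLinearMap_apply, map_sub, Pi.sub_apply, rmapLinearMap_apply, rmapLinearMap_apply,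
      rmap_mulVec_apply_of_isTerminal A fo x' ⟨t, ht⟩, hcore, sub_self]
  rw [mulVec_add, mulVec_forcing_eq_self_of_rmap_terminal A fo hT, add_sub_cancel]

end Forcing

theorem stmt12_general {F : Type*} [Field F] {n : ℕ} (A : Matrix (Fin n) (Fin n) F)
    (Z : Finset (Fin n))
    (fo : ForcingOrder A Z) (b : Fin n → F) :
    ((∃ x, A.mulVec x = b) ↔
      ∃ y : {v // v ∈ Z} → F,
        (coreMatrix A fo).mulVec y = fun t => Rmap A fo b t.1) ∧
    (∀ y : {v // v ∈ Z} → F,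
      (coreMatrix A fo).mulVec y = (fun t => Rmap A fo b t.1) →
      ∀ x' : Fin n → F, (x' = fun i => if h : i ∈ Z then y ⟨i, h⟩ else 0) →
        A.mulVec (x' + Forcing A fo (b - A.mulVec x')) = b) := by
  refine ⟨⟨?_, ?_⟩, ?_⟩
  · rintro ⟨x, rfl⟩
    exact ⟨fun z => x z, funext fun t => (rmap_mulVec_apply_of_isTerminal A fo x t).symm⟩
  · rintro ⟨y, hy⟩
    let x' : Fin n → F := fun i => if h : i ∈ Z then y ⟨i, h⟩ else 0
    exact ⟨_, mulVec_add_forcing_sub_mulVec A fo (x' := x') (by simpa [x'] using hy)⟩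
  · rintro y hy x' rfl
    exact mulVec_add_forcing_sub_mulVec A fo (by simpa using hy)

/-- `A x = b` is solvable iff `B y = (R b)_T` is solvable; moreover,
given such a `y`, the vector `x = x' + Forcing(A, Z, b − A x')`, where `x'` equals `y`
on `Z` and is zero elsewhere, satisfies `A x = b`. -/
theorem stmt12 {F : Type*} [Field F] {n : ℕ} (A : Matrix (Fin n) (Fin n) F)
    (Z : Finset (Fin n)) (hZ : IsZeroForcingSet (adjOf A) ↑Z)
    (fo : ForcingOrder A Z) (b : Fin n → F) :
    ((∃ x, A.mulVec x = b) ↔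
      ∃ y : {v // v ∈ Z} → F,
        (coreMatrix A fo).mulVec y = fun t => Rmap A fo b t.1) ∧
    (∀ y : {v // v ∈ Z} → F,
      (coreMatrix A fo).mulVec y = (fun t => Rmap A fo b t.1) →
      ∀ x' : Fin n → F, (x' = fun i => if h : i ∈ Z then y ⟨i, h⟩ else 0) →
        A.mulVec (x' + Forcing A fo (b - A.mulVec x')) = b) :=
  stmt12_general A Z fo b
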